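/- arXiv:1111.2581 — 3 statements merged into one kernel-verified Lean document; each statement's English description precedes it below -/
import Mathlib

section
/- Let Q be a symmetric positive definite n×n real matrix, let H0 : ℝ^n → ℝ be twice continuously differentiable, and define H(w,v) := H0(w) − (1/2)(w−v)ᵀQ⁻¹(w−v). Suppose that for every v ∈ ℝ^n the maximizer ŵ(v) := argmax_w H(w,v) exists and is unique, that v ↦ ŵ(v) is continuously differentiable, and that D(v) := ∇²_w H(ŵ(v),v) = ∇²H0(ŵ(v)) − Q⁻¹ is invertible for every v. Then the value function G(v) := max_w H(w,v) is twice differentiable and its Hessian satisfies ∇²G(v) = −Q⁻¹ − Q⁻¹ D(v)⁻¹ Q⁻¹ for all v ∈ ℝ^n. -/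
open Matrix

noncomputable def dotCLM {n : ℕ} (a : Fin n → ℝ) : (Fin n → ℝ) →L[ℝ] ℝ :=
  ∑ i, a i • ContinuousLinearMap.proj i

lemma dotCLM_apply {n : ℕ} (a h : Fin n → ℝ) : dotCLM a h = a ⬝ᵥ h := by
  simp [dotCLM, dotProduct]

lemma hasFDerivAt_dotProduct {n : ℕ} {F : Type*} [NormedAddCommGroup F] [NormedSpace ℝ F]
    {f g : F → (Fin n → ℝ)} {f' g' : F →L[ℝ] (Fin n → ℝ)} {x : F}
    (hf : HasFDerivAt f f' x) (hg : HasFDerivAt g g' x) :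
    HasFDerivAt (fun y => f y ⬝ᵥ g y) (dotCLM (g x) ∘L f' + dotCLM (f x) ∘L g') x := by
  have h1 : HasFDerivAt (fun y => ∑ i, f y i * g y i)
      (∑ i : Fin n, (f x i • ((ContinuousLinearMap.proj i : (Fin n → ℝ) →L[ℝ] ℝ) ∘L g')
        + g x i • ((ContinuousLinearMap.proj i : (Fin n → ℝ) →L[ℝ] ℝ) ∘L f'))) x := by
    apply HasFDerivAt.fun_sum
    intro i _
    exact (((ContinuousLinearMap.proj i : (Fin n → ℝ) →L[ℝ] ℝ).hasFDerivAt.comp x hf).fun_mul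
      ((ContinuousLinearMap.proj i : (Fin n → ℝ) →L[ℝ] ℝ).hasFDerivAt.comp x hg))
  convert h1 using 1
  · ext y; simp [dotProduct]
  ext h
  simp [dotCLM_apply, dotProduct, Finset.sum_add_distrib, mul_comm]
  exact add_comm _ _

noncomputable def dotCLML (n : ℕ) : (Fin n → ℝ) →ₗ[ℝ] ((Fin n → ℝ) →L[ℝ] ℝ) where
  toFun := dotCLM
  map_add' a b := by ext h; simp [dotCLM_apply, add_dotProduct]
  map_smul' c a := by ext h; simp [dotCLM_apply, smul_dotProduct]

noncomputable def mulVecCLM {n : ℕ} (A : Matrix (Fin n) (Fin n) ℝ) :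
    (Fin n → ℝ) →L[ℝ] (Fin n → ℝ) :=
  LinearMap.toContinuousLinearMap A.mulVecLin

lemma mulVecCLM_apply {n : ℕ} (A : Matrix (Fin n) (Fin n) ℝ) (x : Fin n → ℝ) :
    mulVecCLM A x = A *ᵥ x := rfl

/-- The Hessian matrix of a scalar function on `ℝ^n`, via iterated directional
derivatives along coordinate directions. -/
noncomputable def hessianMatrix (n : ℕ) (f : (Fin n → ℝ) → ℝ) (x : Fin n → ℝ) :
    Matrix (Fin n) (Fin n) ℝ :=
  Matrix.of fun i j =>
    fderiv ℝ (fun y => fderiv ℝ f y (Pi.single j 1)) x (Pi.single i 1)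

/-- Lemma 1(c) of the paper.
With `H w v = H0 w - (1/2)(w - v)ᵀ Q⁻¹ (w - v)`, `H0` twice continuously
differentiable, `ŵ(v)` the unique maximizer of `w ↦ H w v`, `ŵ` continuously
differentiable, and `D(v) = ∇²_w H(ŵ v, v) = ∇² H0 (ŵ v) − Q⁻¹` invertible for
every `v`, the value function `G v = max_w H w v = H (ŵ v) v` is twice
differentiable with Hessian `∇²G(v) = −Q⁻¹ − Q⁻¹ D(v)⁻¹ Q⁻¹`. -/

theorem stmt2 (n : ℕ) (Q : Matrix (Fin n) (Fin n) ℝ)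
    (hQsym : Q.IsSymm) (hQ : Q.PosDef)
    (H0 : (Fin n → ℝ) → ℝ) (hH0 : ContDiff ℝ 2 H0)
    (H : (Fin n → ℝ) → (Fin n → ℝ) → ℝ)
    (hH : ∀ w v, H w v = H0 w - (1 / 2) * ((w - v) ⬝ᵥ (Q⁻¹ *ᵥ (w - v))))
    (what : (Fin n → ℝ) → (Fin n → ℝ))
    (hmax : ∀ v w, w ≠ what v → H w v < H (what v) v)
    (hwdiff : ContDiff ℝ 1 what)
    (D : (Fin n → ℝ) → Matrix (Fin n) (Fin n) ℝ)
    (hD : ∀ v, D v = hessianMatrix n H0 (what v) - Q⁻¹)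
    (hDinv : ∀ v, IsUnit (D v))
    (G : (Fin n → ℝ) → ℝ)
    (hG : ∀ v, G v = H (what v) v) :
    Differentiable ℝ G ∧ Differentiable ℝ (fun v => fderiv ℝ G v) ∧
      ∀ v, hessianMatrix n G v = -Q⁻¹ - Q⁻¹ * (D v)⁻¹ * Q⁻¹ := by
  set A : Matrix (Fin n) (Fin n) ℝ := Q⁻¹ with hA
  have hAsym : Aᵀ = A := by rw [hA, Matrix.transpose_nonsing_inv, hQsym.eq]
  have hH0d : Differentiable ℝ H0 := hH0.differentiable (by norm_num)
  have hf'd : Differentiable ℝ (fderiv ℝ H0) :=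
    (hH0.fderiv_right (m := 1) (by norm_num)).differentiable one_ne_zero
  have hwd : Differentiable ℝ what := hwdiff.differentiable one_ne_zero
  -- derivative of the quadratic part
  have quadDeriv : ∀ (s : (Fin n → ℝ) → (Fin n → ℝ)) (s' : (Fin n → ℝ) →L[ℝ] (Fin n → ℝ))
      (y : Fin n → ℝ), HasFDerivAt s s' y →
      HasFDerivAt (fun z => (1 / 2 : ℝ) * (s z ⬝ᵥ (A *ᵥ s z))) (dotCLM (A *ᵥ s y) ∘L s') y := by
    intro s s' y hs
    have hMs : HasFDerivAt (fun z => A *ᵥ s z) (mulVecCLM A ∘L s') y :=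
      (mulVecCLM A).hasFDerivAt.comp y hs
    have h := (hasFDerivAt_dotProduct hs hMs).const_mul ((1 : ℝ) / 2)
    refine h.congr_fderiv ?_
    ext u
    have hsym : s y ⬝ᵥ (A *ᵥ s' u) = (A *ᵥ s y) ⬝ᵥ s' u := by
      rw [Matrix.dotProduct_mulVec, ← Matrix.mulVec_transpose, hAsym]
    simp only [ContinuousLinearMap.coe_comp', Function.comp_apply, dotCLM_apply,
      ContinuousLinearMap.smul_apply, ContinuousLinearMap.add_apply, mulVecCLM_apply,
      smul_eq_mul]
    rw [hsym]; ring
  -- first-order condition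
  have hFOC : ∀ v, fderiv ℝ H0 (what v) = dotCLM (A *ᵥ (what v - v)) := by
    intro v
    have hloc : IsLocalMax (fun w => H w v) (what v) := by
      apply Filter.Eventually.of_forall
      intro w
      by_cases hw : w = what v
      · simp [hw]
      · exact (hmax v w hw).le
    have h0 : fderiv ℝ (fun w => H w v) (what v) = 0 := hloc.fderiv_eq_zero
    have hq := quadDeriv (fun w => w - v) (ContinuousLinearMap.id ℝ _) (what v)
      ((hasFDerivAt_id _).sub_const v)
    have htot : HasFDerivAt (fun w => H w v)
        (fderiv ℝ H0 (what v) - dotCLM (A *ᵥ (what v - v)) ∘L ContinuousLinearMap.id ℝ _)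
        (what v) := by
      have := (hH0d (what v)).hasFDerivAt.fun_sub hq
      simpa only [← hH] using this
    have := htot.fderiv
    rw [h0] at this
    rw [ContinuousLinearMap.comp_id] at this
    exact sub_eq_zero.mp this.symm
  -- derivative of G
  have hGderiv : ∀ v, HasFDerivAt G (dotCLM (A *ᵥ (what v - v))) v := by
    intro v
    have hw' : HasFDerivAt what (fderiv ℝ what v) v := (hwd v).hasFDerivAt
    have h1 : HasFDerivAt (fun y => H0 (what y))
        (dotCLM (A *ᵥ (what v - v)) ∘L fderiv ℝ what v) v := by
      have := (hH0d (what v)).hasFDerivAt.comp v hw'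
      rwa [hFOC v] at this
    have h2 := quadDeriv (fun y => what y - y)
      (fderiv ℝ what v - ContinuousLinearMap.id ℝ _) v (hw'.sub (hasFDerivAt_id v))
    have h3 := h1.fun_sub h2
    have hfun : (fun y => H0 (what y) - (1 / 2 : ℝ) * ((what y - y) ⬝ᵥ (A *ᵥ (what y - y)))) = G := by
      funext y; rw [hG y, hH]
    rw [hfun] at h3
    refine h3.congr_fderiv ?_
    ext u
    simp only [dotCLM_apply, ContinuousLinearMap.coe_sub', ContinuousLinearMap.coe_comp',
      Function.comp_apply, Pi.sub_apply, ContinuousLinearMap.coe_id', id_eq,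
      ContinuousLinearMap.sub_apply]
    rw [dotProduct_sub]
    ring
  have hGd : Differentiable ℝ G := fun v => (hGderiv v).differentiableAt
  have hfG : ∀ v, fderiv ℝ G v = dotCLM (A *ᵥ (what v - v)) := fun v => (hGderiv v).fderiv
  have hGd2 : Differentiable ℝ (fun v => fderiv ℝ G v) := by
    have hlin : Differentiable ℝ (fun v : Fin n → ℝ => dotCLM (A *ᵥ (what v - v))) := by
      have heq : (fun v : Fin n → ℝ => dotCLM (A *ᵥ (what v - v))) =
          (LinearMap.toContinuousLinearMap ((dotCLML n).comp A.mulVecLin)) ∘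
            (fun v => what v - v) := rfl
      rw [heq]
      exact (LinearMap.toContinuousLinearMap
        ((dotCLML n).comp A.mulVecLin)).differentiable.comp (hwd.sub differentiable_id)
    have heq2 : (fun v => fderiv ℝ G v) = fun v : Fin n → ℝ => dotCLM (A *ᵥ (what v - v)) :=
      funext hfG
    rw [heq2]; exact hlin
  refine ⟨hGd, hGd2, ?_⟩
  intro v
  -- second derivative machinery for H0
  have hphi : ∀ (x w : Fin n → ℝ), HasFDerivAt (fun y => fderiv ℝ H0 y w)
      ((fderiv ℝ (fderiv ℝ H0) x).flip w) x := by
    intro x w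
    have h := ((hf'd x).hasFDerivAt).clm_apply (hasFDerivAt_const w x)
    simpa using h
  have hessB : ∀ (x : Fin n → ℝ) i j, hessianMatrix n H0 x i j =
      (fderiv ℝ (fderiv ℝ H0) x) (Pi.single i 1) (Pi.single j 1) := by
    intro x i j
    show fderiv ℝ (fun y => fderiv ℝ H0 y (Pi.single j 1)) x (Pi.single i 1) = _
    rw [(hphi x (Pi.single j 1)).fderiv]
    rfl
  have hBsymm : ∀ x : Fin n → ℝ, (hessianMatrix n H0 x)ᵀ = hessianMatrix n H0 x := by
    intro x
    ext i j
    have h2 := second_derivative_symmetric (f := H0) (f' := fderiv ℝ H0)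
      (f'' := fderiv ℝ (fderiv ℝ H0) x) (fun y => (hH0d y).hasFDerivAt)
      ((hf'd x).hasFDerivAt) (Pi.single j 1) (Pi.single i 1)
    rw [Matrix.transpose_apply, hessB, hessB]
    exact h2
  have hsum : ∀ (x u : Fin n → ℝ) (j : Fin n),
      (fderiv ℝ (fderiv ℝ H0) x) u (Pi.single j 1) = ((hessianMatrix n H0 x)ᵀ *ᵥ u) j := by
    intro x u j
    have hu : u = ∑ k, u k • (Pi.single k 1 : Fin n → ℝ) := by
      funext l
      simp [Finset.sum_apply, Pi.single_apply]
    conv_lhs => rw [hu]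
    rw [map_sum, ContinuousLinearMap.sum_apply]
    simp only [_root_.map_smul, ContinuousLinearMap.smul_apply, smul_eq_mul]
    simp [Matrix.mulVec, dotProduct, hessB, mul_comm]
  -- entry derivatives of fderiv G
  have h_inner : ∀ j : Fin n, (fun y => fderiv ℝ G y (Pi.single j 1)) =
      fun y => (A *ᵥ (what y - y)) j := by
    intro j
    funext y
    rw [hfG y, dotCLM_apply, dotProduct_single, mul_one]
  have hentryDeriv : ∀ (j : Fin n), HasFDerivAt (fun y => (A *ᵥ (what y - y)) j)
      ((ContinuousLinearMap.proj j) ∘L (mulVecCLM A) ∘L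
        (fderiv ℝ what v - ContinuousLinearMap.id ℝ _)) v := by
    intro j
    exact (ContinuousLinearMap.proj j).hasFDerivAt.comp v
      ((mulVecCLM A).hasFDerivAt.comp v ((hwd v).hasFDerivAt.sub (hasFDerivAt_id v)))
  set B : Matrix (Fin n) (Fin n) ℝ := hessianMatrix n H0 (what v) with hB
  -- differentiate the first-order condition
  have hkey : ∀ i : Fin n, B *ᵥ (fderiv ℝ what v (Pi.single i 1)) =
      A *ᵥ (fderiv ℝ what v (Pi.single i 1) - Pi.single i 1) := by
    intro i
    set u : Fin n → ℝ := fderiv ℝ what v (Pi.single i 1) with hu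
    funext j
    have hL : HasFDerivAt (fun y => fderiv ℝ H0 (what y) (Pi.single j 1))
        (((fderiv ℝ (fderiv ℝ H0) (what v)).flip (Pi.single j 1)) ∘L fderiv ℝ what v) v :=
      (hphi (what v) (Pi.single j 1)).comp v (hwd v).hasFDerivAt
    have hfun : (fun y => fderiv ℝ H0 (what y) (Pi.single j 1)) =
        fun y => (A *ᵥ (what y - y)) j := by
      funext y
      rw [hFOC y, dotCLM_apply, dotProduct_single, mul_one]
    rw [hfun] at hL
    have huniq := hL.unique (hentryDeriv j)
    have happ := congrFun (congrArg (fun (L : (Fin n → ℝ) →L[ℝ] ℝ) => (L : (Fin n → ℝ) → ℝ))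
      huniq) (Pi.single i 1)
    simp only [ContinuousLinearMap.coe_comp', Function.comp_apply,
      ContinuousLinearMap.flip_apply, ContinuousLinearMap.coe_sub', Pi.sub_apply,
      ContinuousLinearMap.coe_id', id_eq, ContinuousLinearMap.proj_apply,
      mulVecCLM_apply] at happ
    have hls := hsum (what v) u j
    rw [← hu] at happ
    rw [happ] at hls
    rw [← hB, hBsymm] at hls
    exact hls.symm
  have hDs : (D v)ᵀ = D v := by
    rw [hD v, Matrix.transpose_sub, hAsym, ← hB, hBsymm]
  have hDinvS : ((D v)⁻¹)ᵀ = (D v)⁻¹ := by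
    rw [Matrix.transpose_nonsing_inv, hDs]
  have hdet : IsUnit (D v).det := (Matrix.isUnit_iff_isUnit_det _).mp (hDinv v)
  have hMsym : (-A - A * (D v)⁻¹ * A)ᵀ = -A - A * (D v)⁻¹ * A := by
    rw [Matrix.transpose_sub, Matrix.transpose_neg, hAsym, Matrix.transpose_mul,
      Matrix.transpose_mul, hAsym, hDinvS, Matrix.mul_assoc]
  ext i j
  set u : Fin n → ℝ := fderiv ℝ what v (Pi.single i 1) with hu
  have hentry : hessianMatrix n G v i j = (A *ᵥ (u - Pi.single i 1)) j := by
    show fderiv ℝ (fun y => fderiv ℝ G y (Pi.single j 1)) v (Pi.single i 1) = _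
    rw [h_inner j, (hentryDeriv j).fderiv]
    simp [mulVecCLM_apply, Matrix.mulVec_sub, Matrix.mulVec_single, ← hu, Pi.sub_apply]
  have hDu : D v *ᵥ u = -(A *ᵥ Pi.single i 1) := by
    rw [hD v, ← hB, Matrix.sub_mulVec, hkey i, Matrix.mulVec_sub]
    abel
  have husol : u = (D v)⁻¹ *ᵥ (-(A *ᵥ Pi.single i 1)) := by
    rw [← hDu, Matrix.mulVec_mulVec, Matrix.nonsing_inv_mul _ hdet, Matrix.one_mulVec]
  have hform : A *ᵥ (u - Pi.single i 1) = (-A - A * (D v)⁻¹ * A) *ᵥ Pi.single i 1 := by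
    rw [Matrix.mulVec_sub, husol, Matrix.mulVec_neg, Matrix.mulVec_neg, Matrix.mulVec_mulVec,
      Matrix.mulVec_mulVec, Matrix.sub_mulVec, Matrix.neg_mulVec]
    abel
  rw [hentry, hform]
  have hji : ((-A - A * (D v)⁻¹ * A) *ᵥ Pi.single i 1) j = (-A - A * (D v)⁻¹ * A) j i := by
    simp [Matrix.mulVec_single]
  rw [hji]
  calc (-A - A * (D v)⁻¹ * A) j i = (-A - A * (D v)⁻¹ * A)ᵀ i j := rfl
    _ = (-A - A * (D v)⁻¹ * A) i j := by rw [hMsym]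
end

section
/- Let Q be a symmetric positive definite n×n real matrix, u > 0, and let H0 : ℝ^n → ℝ be measurable. Assume there exists ε ∈ (0,1) such that for every v ∈ ℝ^n the integral ∫ exp(u H0(w)) (1 + ‖w‖²) exp(−(u(1−ε)/2)(w−v)ᵀQ⁻¹(w−v)) dw is finite. Define the partition function Z(v) := ∫ exp(u(H0(w) − (1/2)(w−v)ᵀQ⁻¹(w−v))) dw, the normalized log-partition G(v) := (1/u) log Z(v), and the posterior mean x̂(v) := Z(v)⁻¹ ∫ w exp(u(H0(w) − (1/2)(w−v)ᵀQ⁻¹(w−v))) dw. Then G is differentiable and ∇G(v) = Q⁻¹(x̂(v) − v) for all v ∈ ℝ^n. -/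
open Matrix MeasureTheory

-- bilinear CLM
noncomputable def bil (n : ℕ) (M : Matrix (Fin n) (Fin n) ℝ) :
    (Fin n → ℝ) →L[ℝ] (Fin n → ℝ) →L[ℝ] ℝ :=
  LinearMap.toContinuousLinearMap <|
    { toFun := fun x => LinearMap.toContinuousLinearMap <|
        { toFun := fun y => x ⬝ᵥ (M *ᵥ y)
          map_add' := by intro a b; simp [Matrix.mulVec_add, dotProduct_add]
          map_smul' := by intro c a; simp [Matrix.mulVec_smul, dotProduct_smul] }
      map_add' := by intro a b; ext y; simp [add_dotProduct]
      map_smul' := by intro c a; ext y; simp [smul_dotProduct] }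

@[simp] lemma bil_apply (n : ℕ) (M : Matrix (Fin n) (Fin n) ℝ) (x y : Fin n → ℝ) :
    bil n M x y = x ⬝ᵥ (M *ᵥ y) := rfl

lemma bil_symm (n : ℕ) (M : Matrix (Fin n) (Fin n) ℝ) (hM : Mᵀ = M) (x y : Fin n → ℝ) :
    bil n M x y = bil n M y x := by
  simp only [bil_apply]
  rw [Matrix.dotProduct_mulVec, ← Matrix.mulVec_transpose, hM, dotProduct_comm]

lemma bil_nonneg (n : ℕ) (M : Matrix (Fin n) (Fin n) ℝ) (hM : M.PosSemidef) (x : Fin n → ℝ) :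
    0 ≤ bil n M x x := by
  have := hM.re_dotProduct_nonneg x
  simpa using this

lemma bil_key (n : ℕ) (M : Matrix (Fin n) (Fin n) ℝ) (hM : M.PosSemidef) (hMs : Mᵀ = M)
    {ε : ℝ} (hε : 0 < ε) (a b : Fin n → ℝ) :
    (1 - ε) * bil n M a a - (1/ε) * bil n M b b ≤ bil n M (a - b) (a - b) := by
  have h1 : 0 ≤ bil n M (ε • a - b) (ε • a - b) := bil_nonneg n M hM _
  have hsym : bil n M a b = bil n M b a := bil_symm n M hMs a b
  have hb : 0 ≤ bil n M b b := bil_nonneg n M hM b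
  have e1 : bil n M (ε • a - b) (ε • a - b)
      = ε^2 * bil n M a a - 2 * ε * bil n M a b + bil n M b b := by
    simp only [map_sub, _root_.map_smul, ContinuousLinearMap.sub_apply,
      ContinuousLinearMap.smul_apply, ContinuousLinearMap.coe_sub', Pi.sub_apply, smul_eq_mul]
    rw [hsym]; ring
  have e2 : bil n M (a - b) (a - b)
      = bil n M a a - 2 * bil n M a b + bil n M b b := by
    simp only [map_sub, ContinuousLinearMap.sub_apply, ContinuousLinearMap.coe_sub',
      Pi.sub_apply]
    rw [hsym]; ring
  rw [e2]
  rw [e1] at h1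
  have h2 : 2 * bil n M a b ≤ ε * bil n M a a + (1/ε) * bil n M b b := by
    have h3 : (2 * bil n M a b) * ε ≤ (ε * bil n M a a + (1/ε) * bil n M b b) * ε := by
      simp only [bil_apply] at h1
      field_simp
      simp only [bil_apply]; nlinarith [h1]
    exact le_of_mul_le_mul_right h3 hε
  nlinarith [h2, hb]

set_option maxHeartbeats 1000000 in
/-- second identity of Lemma 2 of the paper.
For the partition function `Z(v) = ∫ exp(u (H0 w - (1/2)(w-v)ᵀ Q⁻¹ (w-v))) dw`
(with the stated integrability condition), the normalized log-partition
`G(v) = (1/u) log Z(v)` is differentiable with gradient `∇G(v) = Q⁻¹ (x̂(v) − v)`,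
where `x̂(v)` is the posterior mean; i.e. the directional derivative of `G` at `v`
in direction `dir` is `(Q⁻¹ (x̂ v − v)) ⬝ᵥ dir`. -/
theorem stmt4 (n : ℕ) (Q : Matrix (Fin n) (Fin n) ℝ)
    (hQsym : Q.IsSymm) (hQ : Q.PosDef)
    (u : ℝ) (hu : 0 < u)
    (H0 : (Fin n → ℝ) → ℝ) (hH0 : Measurable H0)
    (hint : ∃ ε : ℝ, ε ∈ Set.Ioo (0 : ℝ) 1 ∧ ∀ v : Fin n → ℝ,
      Integrable (fun w : Fin n → ℝ =>
        Real.exp (u * H0 w) * (1 + ‖w‖ ^ 2) *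
          Real.exp (-(u * (1 - ε) / 2) * ((w - v) ⬝ᵥ (Q⁻¹ *ᵥ (w - v))))))
    (f : (Fin n → ℝ) → (Fin n → ℝ) → ℝ)
    (hf : ∀ v w, f v w =
      Real.exp (u * (H0 w - (1 / 2) * ((w - v) ⬝ᵥ (Q⁻¹ *ᵥ (w - v))))))
    (Z : (Fin n → ℝ) → ℝ) (hZ : ∀ v, Z v = ∫ w : Fin n → ℝ, f v w)
    (G : (Fin n → ℝ) → ℝ) (hG : ∀ v, G v = (1 / u) * Real.log (Z v))
    (xhat : (Fin n → ℝ) → (Fin n → ℝ))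
    (hxhat : ∀ v, xhat v = (Z v)⁻¹ • ∫ w : Fin n → ℝ, f v w • w) :
    Differentiable ℝ G ∧
      ∀ v dir : Fin n → ℝ, fderiv ℝ G v dir = (Q⁻¹ *ᵥ (xhat v - v)) ⬝ᵥ dir := by
  obtain ⟨ε, ⟨hε0, hε1⟩, hdom⟩ := hint
  set M := Q⁻¹ with hMdef
  have hMpd : M.PosDef := hQ.inv
  have hMs : Mᵀ = M := by rw [hMdef, Matrix.transpose_nonsing_inv, hQsym]
  have hpsd := hMpd.posSemidef
  have hqnn : ∀ x : Fin n → ℝ, 0 ≤ bil n M x x := bil_nonneg n M hpsd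
  -- basic facts about f
  have hfpos : ∀ v w, 0 < f v w := fun v w => by rw [hf]; exact Real.exp_pos _
  have hqc : ∀ v : Fin n → ℝ, Continuous fun w : Fin n → ℝ => (w - v) ⬝ᵥ (M *ᵥ (w - v)) := by
    intro v
    have h1 : Continuous fun w : Fin n → ℝ => w - v := continuous_id.sub continuous_const
    exact (bil n M).isBoundedBilinearMap.continuous.comp (h1.prodMk h1)
  have hfm : ∀ v, Measurable (f v) := by
    intro v
    have : f v = fun w => Real.exp (u * (H0 w - (1 / 2) * ((w - v) ⬝ᵥ (M *ᵥ (w - v))))) :=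
      funext (hf v)
    rw [this]
    exact Real.measurable_exp.comp
      ((measurable_const.mul (hH0.sub (measurable_const.mul (hqc v).measurable))))
  have hsplit : ∀ v w, f v w =
      Real.exp (u * H0 w) * Real.exp (-(u / 2) * ((w - v) ⬝ᵥ (M *ᵥ (w - v)))) := by
    intro v w; rw [hf, ← Real.exp_add]; ring_nf
  have hkey1 : ∀ v w, f v w ≤ Real.exp (u * H0 w) *
      Real.exp (-(u * (1 - ε) / 2) * ((w - v) ⬝ᵥ (M *ᵥ (w - v)))) := by
    intro v w
    rw [hsplit]
    have hq := hqnn (w - v)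
    simp only [bil_apply] at hq
    exact mul_le_mul_of_nonneg_left (Real.exp_le_exp.mpr (by
      nlinarith [mul_nonneg (mul_nonneg hu.le hε0.le) hq])) (Real.exp_pos _).le
  have hw2 : ∀ w : Fin n → ℝ, ‖w‖ ≤ 1 + ‖w‖ ^ 2 := fun w => by nlinarith [norm_nonneg w]
  -- integrability of f v and f v • w
  have hfint : ∀ v, Integrable (f v) := by
    intro v
    refine (hdom v).mono (hfm v).aestronglyMeasurable (ae_of_all _ fun w => ?_)
    rw [Real.norm_eq_abs, abs_of_pos (hfpos v w), Real.norm_eq_abs, abs_of_nonneg (by positivity)]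
    calc f v w ≤ Real.exp (u * H0 w) *
        Real.exp (-(u * (1 - ε) / 2) * ((w - v) ⬝ᵥ (M *ᵥ (w - v)))) := hkey1 v w
      _ ≤ Real.exp (u * H0 w) * (1 + ‖w‖ ^ 2) *
          Real.exp (-(u * (1 - ε) / 2) * ((w - v) ⬝ᵥ (M *ᵥ (w - v)))) := by
        rw [show Real.exp (u * H0 w) * Real.exp (-(u * (1 - ε) / 2) * ((w - v) ⬝ᵥ (M *ᵥ (w - v))))
          = Real.exp (u * H0 w) * 1 * Real.exp (-(u * (1 - ε) / 2) * ((w - v) ⬝ᵥ (M *ᵥ (w - v)))) by ring]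
        gcongr
        nlinarith [sq_nonneg ‖w‖]
  have hfwint : ∀ v, Integrable (fun w => f v w • w) := by
    intro v
    refine (hdom v).mono ((hfm v).aestronglyMeasurable.smul aestronglyMeasurable_id)
      (ae_of_all _ fun w => ?_)
    rw [norm_smul, Real.norm_eq_abs, abs_of_pos (hfpos v w), Real.norm_eq_abs,
      abs_of_nonneg (by positivity)]
    calc f v w * ‖w‖ ≤ (Real.exp (u * H0 w) *
        Real.exp (-(u * (1 - ε) / 2) * ((w - v) ⬝ᵥ (M *ᵥ (w - v))))) * ‖w‖ :=
        mul_le_mul_of_nonneg_right (hkey1 v w) (norm_nonneg w)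
      _ = Real.exp (u * H0 w) * ‖w‖ *
          Real.exp (-(u * (1 - ε) / 2) * ((w - v) ⬝ᵥ (M *ᵥ (w - v)))) := by ring
      _ ≤ Real.exp (u * H0 w) * (1 + ‖w‖ ^ 2) *
          Real.exp (-(u * (1 - ε) / 2) * ((w - v) ⬝ᵥ (M *ᵥ (w - v)))) := by
        gcongr
        exact hw2 w
  have hZpos : ∀ v, 0 < Z v := by
    intro v
    rw [hZ]
    rw [integral_pos_iff_support_of_nonneg (fun w => (hfpos v w).le) (hfint v)]
    have : Function.support (f v) = Set.univ := by
      ext w; simp [Function.support, (hfpos v w).ne']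
    rw [this]
    exact isOpen_univ.measure_pos volume Set.univ_nonempty
  -- derivative of f in v
  set F' : (Fin n → ℝ) → (Fin n → ℝ) → ((Fin n → ℝ) →L[ℝ] ℝ) :=
    fun v w => (u * f v w) • bil n M (w - v) with hF'def
  have hdiff : ∀ w v, HasFDerivAt (fun v => f v w) (F' v w) v := by
    intro w v
    have h1 : HasFDerivAt (fun v : Fin n → ℝ => w - v)
        (-(ContinuousLinearMap.id ℝ (Fin n → ℝ))) v := by
      simpa using ((hasFDerivAt_const w v).sub (hasFDerivAt_id (𝕜 := ℝ) v))
    have h2 := (bil n M).hasFDerivAt_of_bilinear h1 h1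
    have h2' : HasFDerivAt (fun v : Fin n → ℝ => (w - v) ⬝ᵥ (M *ᵥ (w - v)))
        ((-2 : ℝ) • bil n M (w - v)) v := by
      refine h2.congr_fderiv ?_
      ext dir
      simp only [ContinuousLinearMap.smul_apply, ContinuousLinearMap.add_apply,
        ContinuousLinearMap.precompL_apply, ContinuousLinearMap.precompR,
        ContinuousLinearMap.coe_comp', Function.comp_apply, ContinuousLinearMap.flip_apply,
        ContinuousLinearMap.neg_apply, ContinuousLinearMap.coe_id', id_eq, map_neg,
        ContinuousLinearMap.compL_apply, smul_eq_mul]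
      rw [bil_symm n M hMs dir (w - v)]
      ring
    have h3 : HasFDerivAt
        (fun v : Fin n → ℝ => u * (H0 w - 1 / 2 * ((w - v) ⬝ᵥ (M *ᵥ (w - v)))))
        (u • ((0 : (Fin n → ℝ) →L[ℝ] ℝ) - (1/2 : ℝ) • ((-2 : ℝ) • bil n M (w - v)))) v := by
      exact (((hasFDerivAt_const (H0 w) v).sub (h2'.const_mul (1/2 : ℝ))).const_mul u)
    have h4 := h3.exp
    have hfeq : (fun v => f v w)
        = fun v => Real.exp (u * (H0 w - 1 / 2 * ((w - v) ⬝ᵥ (M *ᵥ (w - v))))) := by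
      funext v'; rw [hf]
    rw [hfeq]
    refine h4.congr_fderiv ?_
    ext dir
    simp only [hF'def]
    rw [hf]
    simp only [ContinuousLinearMap.smul_apply, ContinuousLinearMap.sub_apply,
      ContinuousLinearMap.zero_apply, smul_eq_mul]
    ring
  have hF'meas : ∀ v, AEStronglyMeasurable (F' v) volume := by
    intro v
    exact ((measurable_const.mul (hfm v)).aestronglyMeasurable).smul
      (((bil n M).continuous.comp (continuous_id.sub continuous_const)).aestronglyMeasurable)
  have hbound : ∀ v₀ : Fin n → ℝ, ∀ w, ∀ v ∈ Metric.ball v₀ 1, ‖F' v w‖ ≤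
      (u * Real.exp (u * ‖bil n M‖ / (2 * ε)) * (‖bil n M‖ * (2 + ‖v₀‖))) *
      (Real.exp (u * H0 w) * (1 + ‖w‖ ^ 2) *
        Real.exp (-(u * (1 - ε) / 2) * ((w - v₀) ⬝ᵥ (M *ᵥ (w - v₀))))) := by
    intro v₀ w v hv
    have hvd : ‖v - v₀‖ < 1 := by rwa [Metric.mem_ball, dist_eq_norm] at hv
    have hBnn : (0:ℝ) ≤ ‖bil n M‖ := (bil n M).opNorm_nonneg
    have hqv : bil n M (v - v₀) (v - v₀) ≤ ‖bil n M‖ := by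
      have hab : bil n M (v - v₀) (v - v₀) ≤ |bil n M (v - v₀) (v - v₀)| := le_abs_self _
      have hob : |bil n M (v - v₀) (v - v₀)| ≤ ‖bil n M‖ * ‖v - v₀‖ * ‖v - v₀‖ :=
        (bil n M).le_opNorm₂ _ _
      have h1 := norm_nonneg (v - v₀)
      nlinarith [mul_nonneg hBnn (mul_nonneg (sub_nonneg.mpr hvd.le)
        (by linarith : (0:ℝ) ≤ 1 + ‖v - v₀‖))]
    have hkey2 : (1 - ε) * bil n M (w - v₀) (w - v₀) - (1/ε) * bil n M (v - v₀) (v - v₀)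
        ≤ bil n M (w - v) (w - v) := by
      have h := bil_key n M hpsd hMs hε0 (w - v₀) (v - v₀)
      rw [show w - v₀ - (v - v₀) = w - v by abel] at h
      exact h
    have hexp : -(u / 2) * ((w - v) ⬝ᵥ (M *ᵥ (w - v)))
        ≤ u * ‖bil n M‖ / (2 * ε) + -(u * (1 - ε) / 2) * ((w - v₀) ⬝ᵥ (M *ᵥ (w - v₀))) := by
      have hint1 : (0:ℝ) ≤ (u/2) * (bil n M (w - v) (w - v) -
          ((1 - ε) * bil n M (w - v₀) (w - v₀) - (1/ε) * bil n M (v - v₀) (v - v₀))) :=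
        mul_nonneg (by linarith) (by linarith)
      have hint2 : (0:ℝ) ≤ ((u/2) * (1/ε)) * (‖bil n M‖ - bil n M (v - v₀) (v - v₀)) :=
        mul_nonneg (by positivity) (by linarith)
      simp only [bil_apply] at hint1 hint2
      ring_nf at hint1 hint2 ⊢
      linarith [hint1, hint2]
    have hfvw : f v w ≤ Real.exp (u * ‖bil n M‖ / (2 * ε)) * (Real.exp (u * H0 w) *
        Real.exp (-(u * (1 - ε) / 2) * ((w - v₀) ⬝ᵥ (M *ᵥ (w - v₀))))) := by
      rw [hsplit]
      have e1 : Real.exp (u * ‖bil n M‖ / (2 * ε)) * (Real.exp (u * H0 w) *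
          Real.exp (-(u * (1 - ε) / 2) * ((w - v₀) ⬝ᵥ (M *ᵥ (w - v₀)))))
          = Real.exp (u * H0 w) * Real.exp (u * ‖bil n M‖ / (2 * ε)
            + -(u * (1 - ε) / 2) * ((w - v₀) ⬝ᵥ (M *ᵥ (w - v₀)))) := by
        rw [Real.exp_add]; ring
      rw [e1]
      exact mul_le_mul_of_nonneg_left (Real.exp_le_exp.mpr hexp) (Real.exp_pos _).le
    have hop : ‖bil n M (w - v)‖ ≤ ‖bil n M‖ * ((2 + ‖v₀‖) * (1 + ‖w‖ ^ 2)) := by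
      refine ((bil n M).le_opNorm _).trans (mul_le_mul_of_nonneg_left ?_ hBnn)
      have h1 : ‖w - v‖ ≤ ‖w‖ + ‖v‖ := norm_sub_le _ _
      have h2 : ‖v‖ ≤ ‖v - v₀‖ + ‖v₀‖ := by
        have : v = (v - v₀) + v₀ := by abel
        nth_rewrite 1 [this]
        exact norm_add_le _ _
      nlinarith [hw2 w, norm_nonneg w, norm_nonneg v₀, sq_nonneg ‖w‖]
    have hstep1 : ‖F' v w‖ = (u * f v w) * ‖bil n M (w - v)‖ := by
      simp only [hF'def]
      rw [norm_smul (α := ℝ) (β := (Fin n → ℝ) →L[ℝ] ℝ) (u * f v w) (bil n M (w - v)),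
        Real.norm_eq_abs, abs_of_pos (mul_pos hu (hfpos v w))]
    rw [hstep1]
    have hstep2 : (u * f v w) * ‖bil n M (w - v)‖
        ≤ (u * (Real.exp (u * ‖bil n M‖ / (2 * ε)) * (Real.exp (u * H0 w) *
            Real.exp (-(u * (1 - ε) / 2) * ((w - v₀) ⬝ᵥ (M *ᵥ (w - v₀))))))) *
          (‖bil n M‖ * ((2 + ‖v₀‖) * (1 + ‖w‖ ^ 2))) := by
      refine mul_le_mul (mul_le_mul_of_nonneg_left hfvw hu.le) hop (norm_nonneg _) ?_
      positivity
    refine hstep2.trans (le_of_eq ?_)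
    ring
  have hZd : ∀ v₀, HasFDerivAt Z (∫ w, F' v₀ w) v₀ := by
    intro v₀
    have hZfun : Z = fun v => ∫ w, f v w := funext hZ
    rw [hZfun]
    exact hasFDerivAt_integral_of_dominated_of_fderiv_le (μ := volume) (Metric.ball_mem_nhds v₀ one_pos)
      (Filter.Eventually.of_forall fun v => (hfm v).aestronglyMeasurable) (hfint v₀)
      (hF'meas v₀) (ae_of_all _ fun w v hv => hbound v₀ w v hv)
      ((hdom v₀).const_mul _) (ae_of_all _ fun w v _ => hdiff w v)
  have hF'int : ∀ v, Integrable (F' v) volume := by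
    intro v
    exact ((hdom v).const_mul
        (u * Real.exp (u * ‖bil n M‖ / (2 * ε)) * (‖bil n M‖ * (2 + ‖v‖)))).mono' (hF'meas v)
      (ae_of_all _ fun w => hbound v w v (Metric.mem_ball_self one_pos))
  have hGd : ∀ v, HasFDerivAt G ((1/u) • ((Z v)⁻¹ • (∫ w, F' v w))) v := by
    intro v
    have hGfun : G = fun v => (1/u) * Real.log (Z v) := funext hG
    rw [hGfun]
    exact ((hZd v).log (hZpos v).ne').const_mul (1/u)
  refine ⟨fun v => (hGd v).differentiableAt, fun v dir => ?_⟩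
  rw [(hGd v).fderiv]
  -- compute the directional derivative
  have hI1 : Integrable (fun w => f v w * bil n M w dir) volume := by
    have e1 : (fun w => f v w * bil n M w dir)
        = fun w => ((bil n M).flip dir) (f v w • w) := by
      funext w
      simp [ContinuousLinearMap.flip_apply, smul_eq_mul]
    rw [e1]
    exact ((bil n M).flip dir).integrable_comp (hfwint v)
  have hInt1 : ∫ w, f v w * bil n M w dir = bil n M (∫ w, f v w • w) dir := by
    have e1 : (fun w => f v w * bil n M w dir)
        = fun w => ((bil n M).flip dir) (f v w • w) := by
      funext w
      simp [ContinuousLinearMap.flip_apply, smul_eq_mul]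
    rw [e1, ContinuousLinearMap.integral_comp_comm _ (hfwint v)]
    simp [ContinuousLinearMap.flip_apply]
  have hΦ : (∫ w, F' v w) dir
      = u * (bil n M (∫ w, f v w • w) dir - Z v * bil n M v dir) := by
    rw [ContinuousLinearMap.integral_apply (hF'int v)]
    have e2 : (fun w => (F' v w) dir)
        = fun w => u * (f v w * bil n M w dir - f v w * bil n M v dir) := by
      funext w
      simp only [hF'def, ContinuousLinearMap.smul_apply, map_sub,
        ContinuousLinearMap.sub_apply, smul_eq_mul]
      ring
    rw [e2, integral_const_mul, integral_sub hI1 ((hfint v).mul_const _), hInt1,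
      integral_mul_const, ← hZ]
  have hrhs : (M *ᵥ (xhat v - v)) ⬝ᵥ dir
      = (Z v)⁻¹ * bil n M (∫ w, f v w • w) dir - bil n M v dir := by
    rw [dotProduct_comm]
    rw [show dir ⬝ᵥ (M *ᵥ (xhat v - v)) = bil n M dir (xhat v - v) from rfl,
      ← bil_symm n M hMs, hxhat v, map_sub, _root_.map_smul]
    simp [smul_eq_mul]
  rw [hrhs]
  simp only [ContinuousLinearMap.smul_apply, smul_eq_mul, hΦ]
  have key : ∀ A B : ℝ, 1/u * ((Z v)⁻¹ * (u * (A - Z v * B))) = (Z v)⁻¹ * A - B := by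
    intro A B
    have hZne : Z v ≠ 0 := (hZpos v).ne'
    field_simp
  exact key _ _
end

section
/- Let F : ℝ^n → ℝ be measurable and continuous at a point x̂ ∈ ℝ^n. Assume: (i) ∫ (1 + ‖x‖) e^{F(x)} dx < ∞; (ii) x̂ is the unique global maximizer of F in the strong sense that for every δ > 0 one has sup_{‖x−x̂‖ ≥ δ} F(x) < F(x̂). For each u ≥ 1 define the probability measure P_u on ℝ^n with density p_u(x) = e^{uF(x)} / Z(u), where Z(u) := ∫ e^{uF(x)} dx. Then the mean E_{P_u}[X] = ∫ x p_u(x) dx converges to x̂ as u → ∞. -/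
open MeasureTheory Filter

/-- convergence of the posterior mean to the maximizer,
Section II of the paper.  If `F : ℝ^n → ℝ` is measurable and continuous at `x̂`,
`(1 + ‖x‖) e^{F}` is integrable, and `x̂` is the unique global maximizer of `F` in
the strong sense that `sup_{‖x − x̂‖ ≥ δ} F(x) < F(x̂)` for every `δ > 0`, then the
mean `E_{P_u}[X] = Z(u)⁻¹ ∫ x e^{u F(x)} dx` of the probability measure with
density `e^{u F} / Z(u)` converges to `x̂` as `u → ∞`. -/
theorem stmt10 (n : ℕ) (F : (Fin n → ℝ) → ℝ) (xhat : Fin n → ℝ)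
    (hFm : Measurable F) (hFc : ContinuousAt F xhat)
    (hint : Integrable (fun x : Fin n → ℝ => (1 + ‖x‖) * Real.exp (F x)))
    (hmax : ∀ δ : ℝ, 0 < δ → ∃ c : ℝ, c < F xhat ∧ ∀ x, δ ≤ ‖x - xhat‖ → F x ≤ c)
    (Z : ℝ → ℝ) (hZ : ∀ u, Z u = ∫ x : Fin n → ℝ, Real.exp (u * F x)) :
    Tendsto (fun u : ℝ => (Z u)⁻¹ • ∫ x : Fin n → ℝ, Real.exp (u * F x) • x)
      atTop (nhds xhat) := by
  set M := F xhat with hM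
  -- F is bounded above by M everywhere
  have hFle : ∀ x, F x ≤ M := by
    intro x
    rcases eq_or_ne x xhat with h | h
    · simp [h, hM]
    · have hpos : (0:ℝ) < ‖x - xhat‖ := by
        rw [norm_pos_iff, sub_ne_zero]; exact h
      obtain ⟨c, hc, hcb⟩ := hmax _ hpos
      exact (hcb x le_rfl).trans hc.le
  have hmexp : ∀ u : ℝ, Measurable fun x => Real.exp (u * F x) := fun u =>
    Real.measurable_exp.comp (hFm.const_mul u)
  have key : ∀ u : ℝ, 1 ≤ u → ∀ x,
      Real.exp (u * F x) ≤ Real.exp ((u - 1) * M) * Real.exp (F x) := by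
    intro u hu x
    rw [← Real.exp_add]
    apply Real.exp_le_exp.mpr
    nlinarith [hFle x]
  have hA0 : ∀ x : Fin n → ℝ, (0:ℝ) ≤ (1 + ‖x‖) * Real.exp (F x) := fun x => by positivity
  -- integrability of the relevant integrands for u ≥ 1
  have hIntExp : ∀ u : ℝ, 1 ≤ u → Integrable fun x : Fin n → ℝ => Real.exp (u * F x) := by
    intro u hu
    refine Integrable.mono' (hint.const_mul (Real.exp ((u-1)*M)))
      ((hmexp u).aestronglyMeasurable) (ae_of_all _ fun x => ?_)
    rw [Real.norm_eq_abs, abs_of_pos (Real.exp_pos _)]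
    calc Real.exp (u * F x) ≤ Real.exp ((u-1)*M) * Real.exp (F x) := key u hu x
      _ ≤ Real.exp ((u-1)*M) * ((1 + ‖x‖) * Real.exp (F x)) := by
          refine mul_le_mul_of_nonneg_left ?_ (Real.exp_pos _).le
          nlinarith [Real.exp_pos (F x), norm_nonneg x]
  have hIntVec : ∀ u : ℝ, 1 ≤ u → Integrable fun x : Fin n → ℝ => Real.exp (u * F x) • x := by
    intro u hu
    refine Integrable.mono' (hint.const_mul (Real.exp ((u-1)*M)))
      (((hmexp u).smul measurable_id).aestronglyMeasurable) (ae_of_all _ fun x => ?_)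
    rw [norm_smul, Real.norm_eq_abs, abs_of_pos (Real.exp_pos _)]
    calc Real.exp (u * F x) * ‖x‖ ≤ (Real.exp ((u-1)*M) * Real.exp (F x)) * ‖x‖ := by
          have := key u hu x
          nlinarith [norm_nonneg x]
      _ ≤ Real.exp ((u-1)*M) * ((1 + ‖x‖) * Real.exp (F x)) := by
          rw [mul_assoc]
          refine mul_le_mul_of_nonneg_left ?_ (Real.exp_pos _).le
          nlinarith [Real.exp_pos (F x), norm_nonneg x]
  -- main ε-argument
  rw [Metric.tendsto_nhds]
  intro ε hε
  obtain ⟨c, hcM, hc⟩ := hmax (ε/2) (half_pos hε)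
  set ε' := (M - c)/2 with hε'def
  have hε' : 0 < ε' := by rw [hε'def]; linarith
  have hev : ∀ᶠ y in nhds xhat, M - ε' < F y :=
    hFc.eventually (eventually_gt_nhds (by linarith))
  obtain ⟨r, hr, hball⟩ := Metric.eventually_nhds_iff_ball.mp hev
  set v := (volume (Metric.ball xhat r)).toReal with hvdef
  have hv : 0 < v :=
    ENNReal.toReal_pos (Metric.measure_ball_pos volume xhat hr).ne' measure_ball_lt_top.ne
  set A := ∫ x : Fin n → ℝ, (1 + ‖x‖) * Real.exp (F x) with hAdef
  set B := (1 + ‖xhat‖) * A with hBdef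
  have hAnn : 0 ≤ A := integral_nonneg hA0
  have hB : 0 ≤ B := mul_nonneg (by positivity) hAnn
  set K := B * Real.exp (-c) / v with hKdef
  -- lower bound on Z u
  have hZlb : ∀ u : ℝ, 1 ≤ u → v * Real.exp (u * (M - ε')) ≤ Z u := by
    intro u hu
    rw [hZ]
    have h1 : ∫ _x in Metric.ball xhat r, Real.exp (u * (M - ε'))
        ≤ ∫ x in Metric.ball xhat r, Real.exp (u * F x) := by
      refine setIntegral_mono_on (integrableOn_const measure_ball_lt_top.ne)
        ((hIntExp u hu).integrableOn) measurableSet_ball fun x hx => ?_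
      apply Real.exp_le_exp.mpr
      have h2 := hball x hx
      nlinarith
    have h2 : ∫ x in Metric.ball xhat r, Real.exp (u * F x) ≤ ∫ x, Real.exp (u * F x) :=
      setIntegral_le_integral (hIntExp u hu) (ae_of_all _ fun x => (Real.exp_pos _).le)
    calc v * Real.exp (u*(M-ε'))
        = ∫ _x in Metric.ball xhat r, Real.exp (u * (M - ε')) := by
          rw [setIntegral_const, smul_eq_mul]; rfl
      _ ≤ _ := h1.trans h2
  -- the far set
  set S : Set (Fin n → ℝ) := {x | ε/2 ≤ ‖x - xhat‖} with hSdef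
  have hS : MeasurableSet S :=
    measurableSet_le measurable_const ((measurable_id.sub measurable_const).norm)
  -- exponential decay
  have hdecay : Tendsto (fun u : ℝ => K * Real.exp (-(ε' * u))) atTop (nhds 0) := by
    have h1 : Tendsto (fun u : ℝ => -(ε' * u)) atTop atBot := by
      apply tendsto_neg_atTop_atBot.comp
      exact Tendsto.const_mul_atTop hε' tendsto_id
    have h2 := (Real.tendsto_exp_atBot.comp h1).const_mul K
    simpa using h2
  have hev2 : ∀ᶠ u in atTop, K * Real.exp (-(ε' * u)) < ε/2 :=
    hdecay.eventually_lt_const (half_pos hε)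
  filter_upwards [eventually_ge_atTop (1:ℝ), hev2] with u hu hKu
  have hIntSub : Integrable fun x : Fin n → ℝ => Real.exp (u * F x) • (x - xhat) := by
    have h := (hIntVec u hu).sub ((hIntExp u hu).smul_const xhat)
    simp only [smul_sub]; exact h
  set Iu := ∫ x : Fin n → ℝ, Real.exp (u * F x) • (x - xhat) with hIu
  have hsplit : Iu = (∫ x in S, Real.exp (u*F x) • (x - xhat))
      + ∫ x in Sᶜ, Real.exp (u*F x) • (x - xhat) := (integral_add_compl hS hIntSub).symm
  have hZpos : 0 < Z u := lt_of_lt_of_le (by positivity) (hZlb u hu)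
  -- far (tail) bound
  have htail : ‖∫ x in S, Real.exp (u*F x) • (x - xhat)‖ ≤ Real.exp ((u-1)*c) * B := by
    have step : ∫ x in S, ‖Real.exp (u*F x) • (x - xhat)‖
        ≤ ∫ x in S, (Real.exp ((u-1)*c) * (1 + ‖xhat‖)) * ((1 + ‖x‖) * Real.exp (F x)) := by
      refine setIntegral_mono_on hIntSub.norm.integrableOn
        ((hint.const_mul _).integrableOn) hS fun x hx => ?_
      rw [norm_smul, Real.norm_eq_abs, abs_of_pos (Real.exp_pos _)]
      have hFx : F x ≤ c := hc x hx
      have h1 : Real.exp (u * F x) ≤ Real.exp ((u-1)*c) * Real.exp (F x) := by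
        rw [← Real.exp_add]; apply Real.exp_le_exp.mpr; nlinarith
      have h2 : ‖x - xhat‖ ≤ (1 + ‖xhat‖) * (1 + ‖x‖) := by
        have h3 := norm_sub_le x xhat
        nlinarith [norm_nonneg x, norm_nonneg xhat]
      calc Real.exp (u * F x) * ‖x - xhat‖
          ≤ (Real.exp ((u-1)*c) * Real.exp (F x)) * ((1 + ‖xhat‖) * (1 + ‖x‖)) :=
            mul_le_mul h1 h2 (norm_nonneg _) (by positivity)
        _ = (Real.exp ((u-1)*c) * (1 + ‖xhat‖)) * ((1 + ‖x‖) * Real.exp (F x)) := by ring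
    calc ‖∫ x in S, Real.exp (u*F x) • (x - xhat)‖
        ≤ ∫ x in S, ‖Real.exp (u*F x) • (x - xhat)‖ := norm_integral_le_integral_norm _
      _ ≤ ∫ x in S, (Real.exp ((u-1)*c) * (1 + ‖xhat‖)) * ((1 + ‖x‖) * Real.exp (F x)) := step
      _ ≤ ∫ x, (Real.exp ((u-1)*c) * (1 + ‖xhat‖)) * ((1 + ‖x‖) * Real.exp (F x)) :=
          setIntegral_le_integral (hint.const_mul _) (ae_of_all _ fun x => by positivity)
      _ = (Real.exp ((u-1)*c) * (1 + ‖xhat‖)) * A := integral_const_mul _ _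
      _ = Real.exp ((u-1)*c) * B := by rw [hBdef]; ring
  -- near bound
  have hnear : ‖∫ x in Sᶜ, Real.exp (u*F x) • (x - xhat)‖ ≤ ε/2 * Z u := by
    have step : ∫ x in Sᶜ, ‖Real.exp (u*F x) • (x - xhat)‖
        ≤ ∫ x in Sᶜ, ε/2 * Real.exp (u * F x) := by
      refine setIntegral_mono_on hIntSub.norm.integrableOn
        (((hIntExp u hu).const_mul _).integrableOn) hS.compl fun x hx => ?_
      rw [norm_smul, Real.norm_eq_abs, abs_of_pos (Real.exp_pos _)]
      have hlt : ‖x - xhat‖ < ε/2 := not_le.mp hx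
      nlinarith [Real.exp_pos (u * F x)]
    calc ‖∫ x in Sᶜ, Real.exp (u*F x) • (x - xhat)‖
        ≤ ∫ x in Sᶜ, ‖Real.exp (u*F x) • (x - xhat)‖ := norm_integral_le_integral_norm _
      _ ≤ ∫ x in Sᶜ, ε/2 * Real.exp (u * F x) := step
      _ = ε/2 * ∫ x in Sᶜ, Real.exp (u * F x) := integral_const_mul _ _
      _ ≤ ε/2 * Z u := by
          rw [hZ]
          exact mul_le_mul_of_nonneg_left
            (setIntegral_le_integral (hIntExp u hu) (ae_of_all _ fun x => (Real.exp_pos _).le))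
            (by positivity)
  -- relate the mean to Iu
  have hI : (∫ x : Fin n → ℝ, Real.exp (u*F x) • x) = Iu + (Z u) • xhat := by
    rw [hIu, hZ, ← integral_smul_const,
      ← integral_add hIntSub ((hIntExp u hu).smul_const xhat)]
    congr 1; funext x; rw [smul_sub]; abel
  rw [dist_eq_norm]
  have hdiff : (Z u)⁻¹ • (∫ x : Fin n → ℝ, Real.exp (u*F x) • x) - xhat = (Z u)⁻¹ • Iu := by
    rw [hI, smul_add, smul_smul, inv_mul_cancel₀ hZpos.ne', one_smul]; abel
  rw [hdiff, norm_smul, Real.norm_eq_abs, abs_of_pos (inv_pos.mpr hZpos)]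
  have hnormI : ‖Iu‖ ≤ ε/2 * Z u + Real.exp ((u-1)*c) * B := by
    rw [hsplit]
    exact (norm_add_le _ _).trans (by linarith [htail, hnear])
  have heq : Real.exp ((u-1)*c) * B / (v * Real.exp (u*(M-ε'))) = K * Real.exp (-(ε'*u)) := by
    have h3 : Real.exp ((u-1)*c) / Real.exp (u*(M-ε')) = Real.exp (-c) * Real.exp (-(ε'*u)) := by
      rw [← Real.exp_add, ← Real.exp_sub]; congr 1; rw [hε'def]; ring
    calc Real.exp ((u-1)*c) * B / (v * Real.exp (u*(M-ε')))
        = (B / v) * (Real.exp ((u-1)*c) / Real.exp (u*(M-ε'))) := by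
          rw [div_mul_eq_div_div]; ring
      _ = (B / v) * (Real.exp (-c) * Real.exp (-(ε'*u))) := by rw [h3]
      _ = K * Real.exp (-(ε'*u)) := by rw [hKdef]; ring
  have hfrac : Real.exp ((u-1)*c) * B / Z u ≤ K * Real.exp (-(ε'*u)) := by
    rw [← heq]
    gcongr
    exact hZlb u hu
  calc (Z u)⁻¹ * ‖Iu‖ ≤ (Z u)⁻¹ * (ε/2 * Z u + Real.exp ((u-1)*c) * B) := by
        exact mul_le_mul_of_nonneg_left hnormI (inv_pos.mpr hZpos).le
    _ = ε/2 + Real.exp ((u-1)*c) * B / Z u := by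
        rw [mul_add]
        congr 1
        · rw [mul_comm, mul_assoc, mul_inv_cancel₀ hZpos.ne', mul_one]
        · rw [div_eq_mul_inv, mul_comm]
    _ ≤ ε/2 + K * Real.exp (-(ε'*u)) := by linarith [hfrac]
    _ < ε := by linarith [hKu]
end
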